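/- With linear staleness cost f(Δ) = Δ, the average cost of the threshold-τ policy is C(τ) = (λ τ(τ-1)/2 + p) / (λ(τ-1) + 1), and the real number τ' minimizing C over τ > 0 is τ' = (√(2pλ - λ + 1) + λ - 1)/λ, provided λ ∈ (0,1) and p > 0 with 2pλ - λ + 1 ≥ 0. -/
import Mathlib


/-- With linear staleness cost f(Δ)=Δ, the average cost of the threshold-τ policy
(extended to real τ) is C(τ) = (λτ(τ-1)/2 + p)/(λ(τ-1)+1), and
τ' = (√(2pλ - λ + 1) + λ - 1)/λ is a global minimizer of C over (0,∞). -/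
theorem linear_cost_real_minimizer
    (lam p : ℝ) (hlam : lam ∈ Set.Ioo (0 : ℝ) 1) (hp : 0 < p)
    (hdisc : 0 ≤ 2 * p * lam - lam + 1)
    (C : ℝ → ℝ)
    (hC : ∀ τ, C τ = (lam * τ * (τ - 1) / 2 + p) / (lam * (τ - 1) + 1))
    (τ' : ℝ) (hτ' : τ' = (Real.sqrt (2 * p * lam - lam + 1) + lam - 1) / lam) :
    0 < τ' ∧ ∀ τ : ℝ, 0 < τ → C τ' ≤ C τ := by
  obtain ⟨hl0, hl1⟩ := hlam
  set s := Real.sqrt (2 * p * lam - lam + 1) with hs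
  have hs2 : s ^ 2 = 2 * p * lam - lam + 1 := Real.sq_sqrt hdisc
  have hs_nonneg : 0 ≤ s := Real.sqrt_nonneg _
  have hsgt : 1 - lam < s := by nlinarith
  have hτeq : lam * τ' = s + lam - 1 := by
    rw [hτ']; field_simp
  have hτpos : 0 < τ' := by nlinarith
  refine ⟨hτpos, fun τ hτ => ?_⟩
  rw [hC, hC]
  have hd : 0 < lam * (τ - 1) + 1 := by nlinarith
  have hd' : lam * (τ' - 1) + 1 = s := by linarith
  have hspos : 0 < s := by linarith
  rw [div_le_div_iff₀ (by rw [hd']; exact hspos) hd]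
  have key : 2 * lam * ((lam * τ * (τ - 1) / 2 + p) * (lam * (τ' - 1) + 1)
      - (lam * τ' * (τ' - 1) / 2 + p) * (lam * (τ - 1) + 1))
      = s * (lam * (τ - 1) + 1 - s) ^ 2 := by
    have hp' : p = (s ^ 2 + lam - 1) / (2 * lam) := by
      field_simp; linarith [hs2]
    rw [hd', hτ', hp']
    field_simp
    ring
  nlinarith [mul_nonneg hs_nonneg (sq_nonneg (lam * (τ - 1) + 1 - s))]
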